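/- (Two-legged symmetry identity) For any partitions α and β and |q| < 1, one has s_α(q^{−ρ}) s_β(q^{−α−ρ}) = s_α(q^{−β−ρ}) s_β(q^{−ρ}), where q^{−ρ} = (q^{i−1/2})_{i≥1} and q^{−α−ρ} = (q^{−α_i + i − 1/2})_{i≥1}. -/

import Mathlib

open scoped Classical

/-- The ring of symmetric functions, realized inside formal power series in x_0, x_1, …. -/
abbrev SymFn := MvPowerSeries ℕ ℚ

/-- Semistandard Young tableaux of skew shape f/g (0-indexed rows/columns, entries in ℕ). -/
def IsSSYT (f g : ℕ → ℕ) (T : ℕ × ℕ → ℕ) : Prop :=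
  (∀ i j, g i ≤ j → j + 1 < f i → T (i, j) ≤ T (i, j + 1)) ∧
  (∀ i j, g i ≤ j → j < f i → g (i + 1) ≤ j → j < f (i + 1) → T (i, j) < T (i + 1, j)) ∧
  (∀ i j, ¬(g i ≤ j ∧ j < f i) → T (i, j) = 0)

/-- The tableau T has content d : its entries realize the monomial x^d. -/
def HasContent (f g : ℕ → ℕ) (T : ℕ × ℕ → ℕ) (d : ℕ →₀ ℕ) : Prop :=
  ∀ v : ℕ, d v = Nat.card {c : ℕ × ℕ | g c.1 ≤ c.2 ∧ c.2 < f c.1 ∧ T c = v}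

/-- The skew Schur function s_{f/g} = Σ_T x^T (0 when g ⊄ f). -/
noncomputable def skewSchur (f g : ℕ → ℕ) : SymFn :=
  fun d => if ∀ i, g i ≤ f i
    then (Nat.card {T : ℕ × ℕ → ℕ // IsSSYT f g T ∧ HasContent f g T d} : ℚ) else 0

/-- The Schur function s_f. -/
noncomputable def schur (f : ℕ → ℕ) : SymFn := skewSchur f fun _ => 0

/-- Evaluation of a symmetric function at complex values x_i (as a convergent sum). -/
noncomputable def evalS (F : SymFn) (x : ℕ → ℂ) : ℂ :=
  ∑' d : ℕ →₀ ℕ, (F d : ℂ) * ∏ i ∈ d.support, x i ^ d i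

/-!
In `n` variables, peeling off the horizontal strip of largest entries of a tableau matches the
expansion of the alternant `a_{λ+δ} = det (x_i ^ (λ_j + n - 1 - j))` after the column operations
`C_j ↦ C_j - x_n ^ (λ_j - λ_{j+1} + 1) C_{j+1}`; by induction this gives the bialternant formula
`a_{λ+δ} = s_λ a_δ`. At `x = q^{-μ-ρ}` every entry of `a_{λ+δ}` splits as a row factor times a
column factor times `q^{-(i - μ_i)(j - λ_j)}`, a matrix symmetric under `λ ↔ μ`. Hence the product
`a_{α+δ}(q^{-ρ}) a_{β+δ}(q^{-α-ρ}) a_δ(q^{-β-ρ})` is invariant under `α ↔ β`, and dividing by the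
nonzero Vandermonde determinants gives the identity for Schur polynomials in `n` variables.
Finally `|x_i| ≤ C |q|^i`, so the tableau sum defining `s_λ(x)` converges absolutely and the Schur
polynomials in `n` variables tend to `s_λ(x)`.
-/

open Finset

lemma Finset.filter_range_eq_range_card {p : ℕ → Prop} [DecidablePred p] {m : ℕ}
    (hp : ∀ a b, a ≤ b → b < m → p b → p a) : (range m).filter p = range #((range m).filter p) := by
  induction m with
  | zero => simp
  | succ m ih =>
    rw [range_add_one, filter_insert]
    split_ifs with hm
    · have hall : (range m).filter p = range m :=
        filter_true_of_mem fun a ha => hp a m (mem_range.1 ha).le (by omega) hm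
      rw [hall, ← range_add_one, card_range]
    · exact ih fun a b hab hb => hp a b hab (by omega)

section Determinants

variable {R : Type*} [CommRing R]

lemma sub_mul_sum_Icc_pow (y t : R) (e : ℕ) {a b : ℕ} (hab : a ≤ b) :
    (y - t) * ∑ m ∈ Icc a b, t ^ (b - m) * y ^ (m + e) =
      y ^ (b + 1 + e) - t ^ (b + 1 - a) * y ^ (a + e) := by
  induction b, hab using Nat.le_induction with
  | base =>
    rw [Icc_self, sum_singleton, Nat.sub_self, Nat.add_sub_cancel_left]
    ring
  | succ b hab ih =>
    rw [sum_Icc_succ_top (by omega), Nat.sub_self, pow_zero, one_mul, mul_add,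
      show b + 1 + 1 - a = b + 1 - a + 1 by omega]
    have hshift : ∑ m ∈ Icc a b, t ^ (b + 1 - m) * y ^ (m + e) =
        t * ∑ m ∈ Icc a b, t ^ (b - m) * y ^ (m + e) := by
      rw [mul_sum]
      refine sum_congr rfl fun m hm => ?_
      rw [show b + 1 - m = b - m + 1 by have := (mem_Icc.1 hm).2; omega]
      ring
    rw [hshift, mul_left_comm, ih]
    ring

lemma det_of_sub_mul_succ_col (n : ℕ) (A : ℕ → ℕ → R) (c : ℕ → R) :
    (Matrix.of fun i j : Fin (n + 1) => A i j - if (j : ℕ) < n then c j * A i (j + 1) else 0).det =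
      (Matrix.of fun i j : Fin (n + 1) => A i j).det := by
  set U : Matrix (Fin (n + 1)) (Fin (n + 1)) R := Matrix.of fun a b =>
    (if a = b then 1 else 0) - if (a : ℕ) = b + 1 then c b else 0
  have hU : U.det = 1 := by
    rw [Matrix.det_of_isLowerTriangular U fun a b (hab : a < b) => ?_]
    · simp [U]
    · simp [U, hab.ne, show (a : ℕ) ≠ b + 1 by have : (a : ℕ) < b := hab; omega]
  conv_rhs => rw [← mul_one (Matrix.det _), ← hU, ← Matrix.det_mul]
  congr 1
  ext i j
  simp only [Matrix.mul_apply, U, Matrix.of_apply, mul_sub, sum_sub_distrib, mul_ite, mul_one,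
    mul_zero, sum_ite_eq', mem_univ, if_true]
  congr 1
  split_ifs with hj
  · rw [sum_eq_single ⟨j + 1, by omega⟩ (fun a _ ha => if_neg fun h => ha (Fin.ext h))
      (by simp)]
    simp [mul_comm]
  · exact (sum_eq_zero fun a _ => if_neg (by omega)).symm

lemma det_eq_mul_det_of_last_row_eq_zero {n : ℕ} (M : Matrix (Fin (n + 1)) (Fin (n + 1)) R)
    (h : ∀ j : Fin n, M (Fin.last n) j.castSucc = 0) :
    M.det = M (Fin.last n) (Fin.last n) * (M.submatrix Fin.castSucc Fin.castSucc).det := by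
  rw [Matrix.det_succ_row M (Fin.last n), Fin.sum_univ_castSucc]
  simp [h, Fin.succAbove_last, ← two_mul]

lemma det_of_sum_col {n : ℕ} {ι : Type*} [DecidableEq ι] (S : Fin n → Finset ι)
    (g : Fin n → ι → Fin n → R) :
    (Matrix.of fun i j => ∑ m ∈ S j, g j m i).det =
      ∑ r ∈ Fintype.piFinset S, (Matrix.of fun i j => g j (r j) i).det := by
  rw [← Matrix.det_transpose]
  have hrows : (Matrix.of fun i j => ∑ m ∈ S j, g j m i).transpose =
      fun j => ∑ m ∈ S j, g j m := by
    ext j i; simp [Finset.sum_apply]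
  rw [hrows]
  change Matrix.detRowAlternating.toMultilinearMap _ = _
  rw [MultilinearMap.map_sum_finset]
  refine sum_congr rfl fun r _ => ?_
  rw [← Matrix.det_transpose]
  rfl

end Determinants

lemma summable_fin_prod_of_nonneg {α : Type*} {φ : α → ℝ} (hφ : Summable φ) (h0 : 0 ≤ φ) :
    ∀ k : ℕ, Summable fun m : Fin k → α => ∏ i, φ (m i)
  | 0 => (hasSum_fintype _).summable
  | k + 1 => by
    have hprod := hφ.mul_of_nonneg (summable_fin_prod_of_nonneg hφ h0 k) h0
      fun m => prod_nonneg fun i _ => h0 (m i)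
    refine (Fin.consEquiv fun _ => α).summable_iff.1 (hprod.congr fun p => ?_)
    simp [Fin.consEquiv, Fin.prod_univ_succ]

namespace IsSSYT

variable {f : ℕ → ℕ} {T T' : ℕ × ℕ → ℕ} (hT : IsSSYT f (fun _ => 0) T)
include hT

lemma row_weak_succ {i j : ℕ} (h : j + 1 < f i) : T (i, j) ≤ T (i, j + 1) :=
  hT.1 i j (Nat.zero_le _) h

lemma col_strict_succ {i j : ℕ} (h1 : j < f i) (h2 : j < f (i + 1)) : T (i, j) < T (i + 1, j) :=
  hT.2.1 i j (Nat.zero_le _) h1 (Nat.zero_le _) h2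

lemma eq_zero {i j : ℕ} (h : ¬ j < f i) : T (i, j) = 0 :=
  hT.2.2 i j fun hc => h hc.2

lemma row_weak {i j k : ℕ} (hjk : j ≤ k) (hk : k < f i) : T (i, j) ≤ T (i, k) := by
  induction k, hjk using Nat.le_induction with
  | base => exact le_rfl
  | succ k _ ih => exact (ih (by omega)).trans (hT.row_weak_succ hk)

lemma row_index_le (hf : Antitone f) : ∀ {i j : ℕ}, j < f i → i ≤ T (i, j)
  | 0, _, _ => Nat.zero_le _
  | i + 1, j, hj => by
    have hj' : j < f i := lt_of_lt_of_le hj (hf (Nat.le_succ i))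
    exact Nat.succ_le_of_lt ((row_index_le hf hj').trans_lt (hT.col_strict_succ hj' hj))

lemma ext_of_eqOn (hT' : IsSSYT f (fun _ => 0) T') (h : ∀ c : ℕ × ℕ, c.2 < f c.1 → T c = T' c) :
    T = T' := by
  funext c
  by_cases hc : c.2 < f c.1
  · exact h c hc
  · exact (hT.eq_zero hc).trans (hT'.eq_zero hc).symm

end IsSSYT

namespace SchurFunction

variable {f g w : ℕ → ℕ} {N n : ℕ} {T T' : ℕ × ℕ → ℕ} {r : Fin n → ℕ} {v : ℂ}

def cells (f : ℕ → ℕ) (N : ℕ) : Finset (ℕ × ℕ) :=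
  (range N ×ˢ range (f 0)).filter fun c => c.2 < f c.1

lemma mem_cells (hf : Antitone f) (hN : ∀ i, N ≤ i → f i = 0) {c : ℕ × ℕ} :
    c ∈ cells f N ↔ c.2 < f c.1 := by
  refine ⟨fun h => (mem_filter.1 h).2, fun h => mem_filter.2 ⟨mem_product.2 ⟨?_, ?_⟩, h⟩⟩
  · exact mem_range.2 (not_le.1 fun hc => by rw [hN _ hc] at h; omega)
  · exact mem_range.2 (lt_of_lt_of_le h (hf (Nat.zero_le _)))


noncomputable def boundedSSYT (f : ℕ → ℕ) (N n : ℕ) : Finset (ℕ × ℕ → ℕ) :=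
  (((cells f N).pi fun _ => range n).image
    fun p c => if h : c ∈ cells f N then p c h else 0).filter (IsSSYT f fun _ => 0)

lemma mem_boundedSSYT (hf : Antitone f) (hN : ∀ i, N ≤ i → f i = 0) :
    T ∈ boundedSSYT f N n ↔ IsSSYT f (fun _ => 0) T ∧ ∀ i j, j < f i → T (i, j) < n := by
  simp only [boundedSSYT, mem_filter, mem_image, mem_pi, mem_range]
  constructor
  · rintro ⟨⟨p, hp, rfl⟩, hT⟩
    refine ⟨hT, fun i j h => ?_⟩
    have hc : (i, j) ∈ cells f N := (mem_cells hf hN).2 h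
    simpa [hc] using hp _ hc
  · rintro ⟨hT, hlt⟩
    refine ⟨⟨fun c _ => T c, fun c hc => hlt c.1 c.2 ((mem_cells hf hN).1 hc), ?_⟩, hT⟩
    funext c
    by_cases hc : c ∈ cells f N
    · simp [hc]
    · simp only [hc, dif_neg, not_false_iff]
      exact (hT.eq_zero fun h => hc ((mem_cells hf hN).2 h)).symm

noncomputable def weight (f : ℕ → ℕ) (N : ℕ) (x : ℕ → ℂ) (T : ℕ × ℕ → ℕ) : ℂ :=
  ∏ c ∈ cells f N, x (T c)

/-- The Schur polynomial `s_f(x_0, …, x_{n-1})`. -/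
noncomputable def schurPoly (f : ℕ → ℕ) (N n : ℕ) (x : ℕ → ℂ) : ℂ :=
  ∑ T ∈ boundedSSYT f N n, weight f N x T

/-- The shapes `r ⊆ f` for which `f / r` is a horizontal strip, when `f` has at most `n + 1`
rows. -/
noncomputable def interlacing (f : ℕ → ℕ) (n : ℕ) : Finset (Fin n → ℕ) :=
  Fintype.piFinset fun j => Icc (f ((j : ℕ) + 1)) (f j)

def extendZero (r : Fin n → ℕ) : ℕ → ℕ := fun i => if h : i < n then r ⟨i, h⟩ else 0

lemma mem_interlacing : r ∈ interlacing f n ↔ ∀ j : Fin n, f ((j : ℕ) + 1) ≤ r j ∧ r j ≤ f j := by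
  simp [interlacing]

lemma extendZero_of_lt {i : ℕ} (h : i < n) : extendZero r i = r ⟨i, h⟩ := dif_pos h

lemma extendZero_of_not_lt {i : ℕ} (h : ¬ i < n) : extendZero r i = 0 := dif_neg h

section Interlacing

variable (hr : r ∈ interlacing f n)
include hr

lemma extendZero_le (i : ℕ) : extendZero r i ≤ f i := by
  by_cases h : i < n
  · rw [extendZero_of_lt h]; exact (mem_interlacing.1 hr ⟨i, h⟩).2
  · rw [extendZero_of_not_lt h]; exact Nat.zero_le _

lemma le_extendZero {i : ℕ} (h : i < n) : f (i + 1) ≤ extendZero r i := by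
  rw [extendZero_of_lt h]; exact (mem_interlacing.1 hr ⟨i, h⟩).1

lemma antitone_extendZero : Antitone (extendZero r) := by
  refine antitone_nat_of_succ_le fun i => ?_
  by_cases h : i + 1 < n
  · exact (extendZero_le hr _).trans (le_extendZero hr (by omega))
  · rw [extendZero_of_not_lt h]; exact Nat.zero_le _

lemma extendZero_eq_zero (hN : ∀ i, N ≤ i → f i = 0) (i : ℕ) (hi : N ≤ i) :
    extendZero r i = 0 :=
  Nat.eq_zero_of_le_zero ((extendZero_le hr i).trans_eq (hN i hi))

lemma card_cells_sdiff (hf : Antitone f) (hN : ∀ i, N ≤ i → f i = 0)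
    (hn : ∀ i, n + 1 ≤ i → f i = 0) :
    #(cells f N \ cells (extendZero r) N) = f n + ∑ j : Fin n, (f j - r j) := by
  have hcells : cells f N \ cells (extendZero r) N =
      (range (n + 1)).biUnion fun i => {i} ×ˢ Ico (extendZero r i) (f i) := by
    ext ⟨i, j⟩
    simp only [mem_sdiff, mem_cells hf hN,
      mem_cells (antitone_extendZero hr) (extendZero_eq_zero hr hN), mem_biUnion, mem_range,
      mem_product, mem_singleton, mem_Ico]
    constructor
    · rintro ⟨hj, hj'⟩
      refine ⟨i, not_le.1 fun hi => ?_, rfl, by omega, hj⟩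
      rw [hn i hi] at hj; omega
    · rintro ⟨i, -, rfl, hj, hj'⟩
      exact ⟨hj', by omega⟩
  rw [hcells, card_biUnion]
  · simp only [card_product, card_singleton, Nat.card_Ico, one_mul]
    rw [sum_range_succ, extendZero_of_not_lt (lt_irrefl n), Nat.sub_zero, add_comm,
      sum_range fun i => f i - extendZero r i]
    simp only [extendZero_of_lt (Fin.is_lt _), Fin.eta]
  · intro a _ b _ hab
    simp only [Function.onFun, disjoint_left, mem_product, mem_singleton]
    rintro c ⟨rfl, -⟩ ⟨rfl, -⟩
    exact hab rfl

end Interlacing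

noncomputable def innerShape (f : ℕ → ℕ) (n : ℕ) (T : ℕ × ℕ → ℕ) : Fin n → ℕ :=
  fun j => #{c ∈ range (f j) | T (j, c) < n}

def eraseTop (n : ℕ) (T : ℕ × ℕ → ℕ) : ℕ × ℕ → ℕ := fun c => if T c < n then T c else 0

def fillStrip (f : ℕ → ℕ) (r : Fin n → ℕ) (T' : ℕ × ℕ → ℕ) : ℕ × ℕ → ℕ :=
  fun c => if c.2 < extendZero r c.1 then T' c else if c.2 < f c.1 then n else 0

section Erase

variable (hf : Antitone f) (hN : ∀ i, N ≤ i → f i = 0) (hn : ∀ i, n + 1 ≤ i → f i = 0)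
  (hT : IsSSYT f (fun _ => 0) T) (hle : ∀ i j, j < f i → T (i, j) ≤ n)

include hT in
lemma lt_iff_lt_innerShape (j : Fin n) {c : ℕ} (hc : c < f j) :
    T (j, c) < n ↔ c < innerShape f n T j := by
  have hinit := filter_range_eq_range_card (p := fun c => T (j, c) < n) (m := f j)
    fun a b hab hb hp => (hT.row_weak hab hb).trans_lt hp
  conv_rhs => rw [innerShape, ← mem_range, ← hinit]
  simp [hc]

include hf hT hle in
lemma innerShape_mem_interlacing : innerShape f n T ∈ interlacing f n := by
  refine mem_interlacing.2 fun j => ⟨?_, ?_⟩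
  · have hsub : range (f ((j : ℕ) + 1)) ⊆ {c ∈ range (f j) | T (j, c) < n} := by
      intro c hc
      rw [mem_range] at hc
      have hcj : c < f j := lt_of_lt_of_le hc (hf (Nat.le_succ _))
      exact mem_filter.2 ⟨mem_range.2 hcj,
        (hT.col_strict_succ hcj hc).trans_le (hle _ _ hc)⟩
    simpa [innerShape] using card_le_card hsub
  · simpa [innerShape] using card_filter_le (range (f j)) fun c => T (j, c) < n

include hT in
lemma lt_of_lt_extendZero_innerShape {i j : ℕ} (h : j < extendZero (innerShape f n T) i) :
    T (i, j) < n := by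
  have hi : i < n := not_le.1 fun hi => by rw [extendZero_of_not_lt (by omega)] at h; omega
  rw [extendZero_of_lt hi] at h
  have hj : j < f i := h.trans_le (card_filter_le _ _) |>.trans_le (by simp)
  exact (lt_iff_lt_innerShape hT ⟨i, hi⟩ hj).2 h

include hf hn hT hle in
lemma eq_of_extendZero_innerShape_le {i j : ℕ}
    (h1 : extendZero (innerShape f n T) i ≤ j) (h2 : j < f i) : T (i, j) = n := by
  by_cases hi : i < n
  · rw [extendZero_of_lt hi] at h1
    have := (lt_iff_lt_innerShape hT ⟨i, hi⟩ h2).not.2 (by omega)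
    exact le_antisymm (hle i j h2) (not_lt.1 this)
  · have hin : i = n := by
      by_contra hne
      rw [hn i (by omega)] at h2; omega
    subst hin
    exact le_antisymm (hle _ _ h2) (hT.row_index_le hf h2)

include hf hN hn hT hle in
lemma eraseTop_mem_boundedSSYT :
    eraseTop n T ∈ boundedSSYT (extendZero (innerShape f n T)) N n := by
  have hr := innerShape_mem_interlacing hf hT hle
  have hlt {i j : ℕ} (h : j < extendZero (innerShape f n T) i) :=
    lt_of_lt_extendZero_innerShape hT h
  refine (mem_boundedSSYT (antitone_extendZero hr) (extendZero_eq_zero hr hN)).2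
    ⟨⟨fun i j _ hj => ?_, fun i j _ hj1 _ hj2 => ?_, fun i j hj => ?_⟩, fun i j hj => ?_⟩
  · have hj' : j < extendZero (innerShape f n T) i := by omega
    simpa only [eraseTop, hlt hj', hlt hj, if_true] using
      hT.row_weak_succ (hj.trans_le (extendZero_le hr i))
  · simpa only [eraseTop, hlt hj1, hlt hj2, if_true] using
      hT.col_strict_succ (hj1.trans_le (extendZero_le hr i)) (hj2.trans_le (extendZero_le hr _))
  · have hj : extendZero (innerShape f n T) i ≤ j := not_lt.1 fun h => hj ⟨Nat.zero_le _, h⟩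
    by_cases hjf : j < f i
    · simp [eraseTop, eq_of_extendZero_innerShape_le hf hn hT hle hj hjf]
    · simp [eraseTop, hT.eq_zero hjf]
  · simp [eraseTop, hlt hj]

include hf hN hn hT hle in
lemma weight_eq_mul_weight_eraseTop (x : ℕ → ℂ) :
    weight f N x T = x n ^ (f n + ∑ j : Fin n, (f j - innerShape f n T j)) *
      weight (extendZero (innerShape f n T)) N x (eraseTop n T) := by
  have hr := innerShape_mem_interlacing hf hT hle
  have hmem (c : ℕ × ℕ) := mem_cells (c := c) (antitone_extendZero hr) (extendZero_eq_zero hr hN)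
  have hsub : cells (extendZero (innerShape f n T)) N ⊆ cells f N := fun c hc =>
    (mem_cells hf hN).2 (((hmem c).1 hc).trans_le (extendZero_le hr c.1))
  rw [weight, ← prod_sdiff hsub, ← card_cells_sdiff hr hf hN hn, ← prod_const]
  congr 1
  · refine prod_congr rfl fun c hc => ?_
    obtain ⟨hcf, hcr⟩ := mem_sdiff.1 hc
    rw [eq_of_extendZero_innerShape_le hf hn hT hle (not_lt.1 (hcr ∘ (hmem c).2))
      ((mem_cells hf hN).1 hcf)]
  · exact prod_congr rfl fun c hc => by
      simp [eraseTop, lt_of_lt_extendZero_innerShape hT ((hmem c).1 hc)]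

include hf hn hT hle in
lemma fillStrip_innerShape_eraseTop : fillStrip f (innerShape f n T) (eraseTop n T) = T := by
  funext ⟨i, j⟩
  by_cases h1 : j < extendZero (innerShape f n T) i
  · simp [fillStrip, eraseTop, h1, lt_of_lt_extendZero_innerShape hT h1]
  · by_cases h2 : j < f i
    · simp [fillStrip, h1, h2, eq_of_extendZero_innerShape_le hf hn hT hle (not_lt.1 h1) h2]
    · simp [fillStrip, h1, h2, hT.eq_zero h2]

end Erase

section Fill

variable (hn : ∀ i, n + 1 ≤ i → f i = 0) (hr : r ∈ interlacing f n)
  (hT' : IsSSYT (extendZero r) (fun _ => 0) T') (hlt : ∀ i j, j < extendZero r i → T' (i, j) < n)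

include hn hr hT' hlt in
lemma isSSYT_fillStrip : IsSSYT f (fun _ => 0) (fillStrip f r T') := by
  refine ⟨fun i j _ hj => ?_, fun i j _ hj1 _ hj2 => ?_, fun i j hj => ?_⟩
  · by_cases h1 : j + 1 < extendZero r i
    · simpa [fillStrip, h1, (by omega : j < extendZero r i)] using hT'.row_weak_succ h1
    · by_cases h0 : j < extendZero r i
      · simpa [fillStrip, h0, h1, hj] using (hlt i j h0).le
      · simp [fillStrip, h0, h1, hj, (by omega : j < f i)]
  · have hin : i < n := not_le.1 fun hi => by rw [hn (i + 1) (by omega)] at hj2; omega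
    by_cases h2 : j < extendZero r (i + 1)
    · have h1 : j < extendZero r i := h2.trans_le (antitone_extendZero hr (Nat.le_succ i))
      simpa [fillStrip, h1, h2] using hT'.col_strict_succ h1 h2
    · have h1 : j < extendZero r i := hj2.trans_le (le_extendZero hr hin)
      simpa [fillStrip, h1, h2, hj2] using hlt i j h1
  · have hjf : ¬ j < f i := fun h => hj ⟨Nat.zero_le _, h⟩
    have hjr : ¬ j < extendZero r i := fun h => hjf (h.trans_le (extendZero_le hr i))
    simp [fillStrip, hjr, hjf]

include hlt in
lemma fillStrip_le (i j : ℕ) : fillStrip f r T' (i, j) ≤ n := by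
  unfold fillStrip
  split_ifs with h1
  · exact (hlt i j h1).le
  · exact le_rfl
  · exact Nat.zero_le _

include hr hlt in
lemma innerShape_fillStrip : innerShape f n (fillStrip f r T') = r := by
  funext j
  have hfilter : {c ∈ range (f j) | fillStrip f r T' (j, c) < n} = range (r j) := by
    ext c
    have hrj : extendZero r j = r j := extendZero_of_lt j.is_lt
    simp only [mem_filter, mem_range, fillStrip, hrj]
    by_cases hc : c < r j
    · simpa [hc] using ⟨hc.trans_le (mem_interlacing.1 hr j).2, hlt j c (hrj ▸ hc)⟩
    · by_cases hcf : c < f j <;> simp [hc, hcf]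
  rw [innerShape, hfilter, card_range]

include hT' hlt in
lemma eraseTop_fillStrip : eraseTop n (fillStrip f r T') = T' := by
  funext ⟨i, j⟩
  by_cases h1 : j < extendZero r i
  · simp [eraseTop, fillStrip, h1, hlt i j h1]
  · have hz : T' (i, j) = 0 := hT'.eq_zero h1
    by_cases h2 : j < f i <;> simp [eraseTop, fillStrip, h1, h2, hz]

end Fill

/-- Branching rule: removing the horizontal strip of largest entries `n`. -/
lemma schurPoly_succ (hf : Antitone f) (hN : ∀ i, N ≤ i → f i = 0)
    (hn : ∀ i, n + 1 ≤ i → f i = 0) (x : ℕ → ℂ) :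
    schurPoly f N (n + 1) x = ∑ r ∈ interlacing f n,
      x n ^ (f n + ∑ j : Fin n, (f j - r j)) * schurPoly (extendZero r) N n x := by
  have hmem {T} : T ∈ boundedSSYT f N (n + 1) ↔
      IsSSYT f (fun _ => 0) T ∧ ∀ i j, j < f i → T (i, j) ≤ n := by
    simp only [mem_boundedSSYT hf hN, Nat.lt_succ_iff]
  have hmem' {r : Fin n → ℕ} (hr : r ∈ interlacing f n) {T'} :=
    mem_boundedSSYT (n := n) (T := T') (antitone_extendZero hr) (extendZero_eq_zero hr hN)
  simp only [schurPoly, mul_sum]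
  rw [sum_sigma']
  refine sum_nbij' (fun T => ⟨innerShape f n T, eraseTop n T⟩) (fun p => fillStrip f p.1 p.2)
    ?_ ?_ ?_ ?_ ?_
  · intro T hT
    obtain ⟨hT, hle⟩ := hmem.1 hT
    exact mem_sigma.2
      ⟨innerShape_mem_interlacing hf hT hle, eraseTop_mem_boundedSSYT hf hN hn hT hle⟩
  · rintro ⟨r, T'⟩ hp
    obtain ⟨hr, hT'⟩ := mem_sigma.1 hp
    obtain ⟨hT', hlt⟩ := (hmem' hr).1 hT'
    exact hmem.2 ⟨isSSYT_fillStrip hn hr hT' hlt, fun i j _ => fillStrip_le hlt i j⟩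
  · intro T hT
    obtain ⟨hT, hle⟩ := hmem.1 hT
    exact fillStrip_innerShape_eraseTop hf hn hT hle
  · rintro ⟨r, T'⟩ hp
    obtain ⟨hr, hT'⟩ := mem_sigma.1 hp
    obtain ⟨hT', hlt⟩ := (hmem' hr).1 hT'
    simp only [innerShape_fillStrip hr hlt, eraseTop_fillStrip hT' hlt]
  · intro T hT
    obtain ⟨hT, hle⟩ := hmem.1 hT
    exact weight_eq_mul_weight_eraseTop hf hN hn hT hle x

/-- The alternant `a_{f+δ}(x_0, …, x_{n-1})`. -/
noncomputable def alternant (f : ℕ → ℕ) (n : ℕ) (x : ℕ → ℂ) : ℂ :=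
  (Matrix.of fun i j : Fin n => x i ^ (f j + (n - 1 - (j : ℕ)))).det

lemma alternant_extendZero (r : Fin n → ℕ) (x : ℕ → ℂ) :
    alternant (extendZero r) n x =
      (Matrix.of fun i j : Fin n => x i ^ (r j + (n - 1 - (j : ℕ)))).det := by
  simp [alternant, extendZero_of_lt]

lemma alternant_succ (hf : Antitone f) (x : ℕ → ℂ) :
    alternant f (n + 1) x = x n ^ f n * (∏ i : Fin n, (x i - x n)) *
      ∑ r ∈ interlacing f n, (∏ j : Fin n, x n ^ (f j - r j)) * alternant (extendZero r) n x := by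
  set t := x n
  set A : ℕ → ℕ → ℂ := fun i j => x i ^ (f j + (n - j))
  set b : ℕ → ℕ → ℂ := fun i j =>
    ∑ m ∈ Icc (f (j + 1)) (f j), t ^ (f j - m) * x i ^ (m + (n - 1 - j))
  have hA : alternant f (n + 1) x = (Matrix.of fun i j : Fin (n + 1) => A i j).det := by
    simp [alternant, A]
  have hcol (i j : ℕ) (hj : j < n) :
      A i j - t ^ (f j - f (j + 1) + 1) * A i (j + 1) = (x i - t) * b i j := by
    have hfj : f (j + 1) ≤ f j := hf (Nat.le_add_right j 1)
    rw [sub_mul_sum_Icc_pow _ _ _ hfj, show f j + 1 + (n - 1 - j) = f j + (n - j) by omega,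
      show f j + 1 - f (j + 1) = f j - f (j + 1) + 1 by omega,
      show f (j + 1) + (n - 1 - j) = f (j + 1) + (n - (j + 1)) by omega]
  rw [hA, ← det_of_sub_mul_succ_col n A fun j => t ^ (f j - f (j + 1) + 1),
    det_eq_mul_det_of_last_row_eq_zero]
  · have hsub : ((Matrix.of fun i j : Fin (n + 1) => A i j -
        if (j : ℕ) < n then t ^ (f j - f (j + 1) + 1) * A i (j + 1) else 0).submatrix
          Fin.castSucc Fin.castSucc) = Matrix.of fun i j : Fin n => (x i - t) * b i j := by
      ext i j
      simp [hcol i j j.is_lt]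
    have hfactor :=
      Matrix.det_mul_column (fun i : Fin n => x i - t) (Matrix.of fun i j : Fin n => b i j)
    simp only [Matrix.of_apply] at hfactor
    rw [hsub, Matrix.of_apply, hfactor, det_of_sum_col]
    simp only [Fin.val_last, lt_irrefl, if_false, sub_zero, Nat.sub_self, add_zero, A]
    rw [mul_assoc]
    congr 2
    refine sum_congr rfl fun r _ => ?_
    rw [alternant_extendZero]
    exact Matrix.det_mul_row (fun j : Fin n => t ^ (f j - r j))
      (Matrix.of fun i j : Fin n => x i ^ (r j + (n - 1 - (j : ℕ))))
  · intro j
    have hj : f ((j : ℕ) + 1) ≤ f j := hf (Nat.le_succ _)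
    simp only [Matrix.of_apply, Fin.val_last, Fin.val_castSucc, j.is_lt, if_true, A]
    rw [← pow_add, show f j - f ((j : ℕ) + 1) + 1 + (f ((j : ℕ) + 1) + (n - ((j : ℕ) + 1))) =
      f j + (n - j) by omega, sub_self]

lemma schurPoly_zero (x : ℕ → ℂ) : schurPoly (fun _ => 0) N n x = 1 := by
  have hcells : cells (fun _ => 0) N = ∅ := by ext; simp [cells]
  have hunique : boundedSSYT (fun _ => 0) N n = {fun _ => 0} := by
    ext T
    rw [mem_boundedSSYT antitone_const fun _ _ => rfl, mem_singleton]
    constructor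
    · rintro ⟨hT, -⟩
      exact funext fun c => hT.eq_zero (Nat.not_lt_zero _)
    · rintro rfl
      exact ⟨⟨fun _ _ _ h => absurd h (by omega), fun _ _ _ h => absurd h (by omega),
        fun _ _ _ => rfl⟩, fun _ _ h => absurd h (by omega)⟩
  simp [schurPoly, weight, hunique, hcells]

lemma alternant_zero_succ (x : ℕ → ℂ) :
    alternant (fun _ => 0) (n + 1) x = (∏ i : Fin n, (x i - x n)) * alternant (fun _ => 0) n x := by
  have hstrip : interlacing (fun _ => 0) n = {fun _ => 0} := by
    ext r; simp [interlacing, funext_iff]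
  have hzero : extendZero (fun _ : Fin n => 0) = fun _ => 0 := by
    funext i; by_cases h : i < n <;> simp [extendZero, h]
  simp [alternant_succ antitone_const, hstrip, hzero]

theorem alternant_eq_schurPoly_mul (hf : Antitone f) (hN : ∀ i, N ≤ i → f i = 0)
    (hn : ∀ i, n ≤ i → f i = 0) (x : ℕ → ℂ) :
    alternant f n x = schurPoly f N n x * alternant (fun _ => 0) n x := by
  induction n generalizing f with
  | zero =>
    obtain rfl : f = fun _ => 0 := funext fun i => hn i (Nat.zero_le i)
    rw [schurPoly_zero, one_mul]
  | succ n ih =>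
    rw [alternant_succ hf, schurPoly_succ hf hN hn, alternant_zero_succ, sum_mul, mul_sum]
    refine sum_congr rfl fun r hr => ?_
    rw [ih (antitone_extendZero hr) (extendZero_eq_zero hr hN)
      (fun i hi => extendZero_of_not_lt (by omega)), pow_add, ← prod_pow_eq_pow_sum]
    ring

/-- The point `q^{-w-ρ}`, i.e. `x_i = q^{i - w_i + 1/2}` (`i ≥ 0`), written with `v = q^{1/2}`. -/
noncomputable def qSpec (v : ℂ) (w : ℕ → ℕ) : ℕ → ℂ :=
  fun i => v ^ (2 * ((i : ℤ) - (w i : ℤ)) + 1)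

lemma qSpec_zero (v : ℂ) : qSpec v (fun _ => 0) = fun i : ℕ => v ^ (2 * (i : ℤ) + 1) := by
  funext i
  simp [qSpec]

noncomputable def kernelDet (v : ℂ) (u w : ℕ → ℕ) (n : ℕ) : ℂ :=
  (Matrix.of fun i j : Fin n =>
    v ^ (-2 * (((i : ℕ) : ℤ) - (w i : ℤ)) * (((j : ℕ) : ℤ) - (u j : ℤ)))).det

lemma kernelDet_comm (v : ℂ) (u w : ℕ → ℕ) (n : ℕ) : kernelDet v u w n = kernelDet v w u n := by
  rw [kernelDet, ← Matrix.det_transpose]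
  congr 1
  ext i j
  simp only [Matrix.transpose_apply, Matrix.of_apply]
  ring_nf

lemma alternant_qSpec (hv : v ≠ 0) (u w : ℕ → ℕ) :
    alternant u n (qSpec v w) =
      (∏ i : Fin n, v ^ ((2 * (((i : ℕ) : ℤ) - (w i : ℤ)) + 1) * ((n : ℤ) - 1))) *
        ((∏ j : Fin n, v ^ (-(((j : ℕ) : ℤ) - (u j : ℤ)))) * kernelDet v u w n) := by
  rw [kernelDet, ← Matrix.det_mul_row, ← Matrix.det_mul_column, alternant]
  congr 1
  ext i j
  simp only [Matrix.of_apply, qSpec]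
  rw [← zpow_natCast, ← zpow_mul, ← zpow_add₀ hv, ← zpow_add₀ hv]
  congr 1
  have hj : (j : ℕ) < n := j.is_lt
  push_cast [Nat.sub_sub, show 1 + (j : ℕ) ≤ n by omega]
  ring

lemma alternant_zero_qSpec_ne_zero (hv : v ≠ 0) (hv1 : ‖v‖ < 1) (hw : Antitone w) :
    alternant (fun _ => 0) n (qSpec v w) ≠ 0 := by
  have hinj : Function.Injective fun i : Fin n => qSpec v w i := by
    have hexp : StrictMono fun i : ℕ => 2 * ((i : ℤ) - (w i : ℤ)) + 1 := fun i j hij => by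
      have := hw hij.le; dsimp only; omega
    intro i j hij
    have hnorm := congrArg norm hij
    simp only [qSpec, norm_zpow] at hnorm
    exact Fin.ext <| hexp.injective <|
      (zpow_right_strictAnti₀ (norm_pos_iff.2 hv) hv1).injective hnorm
  have hvdm : (Matrix.of fun i j : Fin n => qSpec v w i ^ (0 + (n - 1 - (j : ℕ)))) =
      (Matrix.vandermonde fun i : Fin n => qSpec v w i).submatrix id Fin.revPerm := by
    ext i j
    simp only [Matrix.of_apply, Matrix.submatrix_apply, Matrix.vandermonde_apply, id_eq,
      Fin.revPerm_apply, Fin.val_rev]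
    congr 1
    omega
  rw [alternant, hvdm, Matrix.det_permute']
  exact mul_ne_zero (by simp) (Matrix.det_vandermonde_ne_zero_iff.2 hinj)

lemma alternant_qSpec_cyclic (hv : v ≠ 0) (u w z : ℕ → ℕ) :
    alternant u n (qSpec v z) * alternant w n (qSpec v u) * alternant z n (qSpec v w) =
      alternant u n (qSpec v w) * alternant w n (qSpec v z) * alternant z n (qSpec v u) := by
  simp only [alternant_qSpec hv]
  rw [kernelDet_comm v u z, kernelDet_comm v w u, kernelDet_comm v z w]
  ring

lemma schurPoly_qSpec_mul_comm (hv : v ≠ 0) (hv1 : ‖v‖ < 1) (hf : Antitone f) (hg : Antitone g)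
    (hNf : ∀ i, N ≤ i → f i = 0) (hNg : ∀ i, N ≤ i → g i = 0) (hn : N ≤ n) :
    schurPoly f N n (qSpec v fun _ => 0) * schurPoly g N n (qSpec v f) =
      schurPoly f N n (qSpec v g) * schurPoly g N n (qSpec v fun _ => 0) := by
  have key := alternant_qSpec_cyclic (n := n) hv f g (fun _ => 0)
  have hnf (i) (hi : n ≤ i) : f i = 0 := hNf i (hn.trans hi)
  have hng (i) (hi : n ≤ i) : g i = 0 := hNg i (hn.trans hi)
  simp only [alternant_eq_schurPoly_mul hf hNf hnf, alternant_eq_schurPoly_mul hg hNg hng] at key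
  have h0 := alternant_zero_qSpec_ne_zero (n := n) hv hv1 (antitone_const (β := ℕ) (c := 0))
  have hf0 := alternant_zero_qSpec_ne_zero (n := n) hv hv1 hf
  have hg0 := alternant_zero_qSpec_ne_zero (n := n) hv hv1 hg
  exact mul_right_cancel₀ (mul_ne_zero (mul_ne_zero h0 hf0) hg0) (by linear_combination key)

open Filter Topology

abbrev SSYT (f : ℕ → ℕ) := {T : ℕ × ℕ → ℕ // IsSSYT f (fun _ => 0) T}

lemma summable_weight (hf : Antitone f) (hN : ∀ i, N ≤ i → f i = 0) {x : ℕ → ℂ} {C r : ℝ}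
    (hC : 0 ≤ C) (hr0 : 0 ≤ r) (hr1 : r < 1) (hx : ∀ i, ‖x i‖ ≤ C * r ^ i) :
    Summable fun T : SSYT f => weight f N x T.1 := by
  set e := (cells f N).equivFin
  set entries : SSYT f → Fin #(cells f N) → ℕ := fun T i => T.1 (e.symm i)
  have hinj : Function.Injective entries := fun T T' h => Subtype.ext <|
    T.2.ext_of_eqOn T'.2 fun c hc => by
      simpa [entries] using congrFun h (e ⟨c, (mem_cells hf hN).2 hc⟩)
  have hgeom := summable_fin_prod_of_nonneg ((summable_geometric_of_lt_one hr0 hr1).mul_left C)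
    (fun t => by positivity) #(cells f N)
  refine Summable.of_norm_bounded (hgeom.comp_injective hinj) fun T => ?_
  rw [weight, norm_prod, ← prod_attach]
  calc ∏ c ∈ (cells f N).attach, ‖x (T.1 c)‖ ≤ ∏ c ∈ (cells f N).attach, C * r ^ T.1 c :=
        prod_le_prod (fun _ _ => norm_nonneg _) fun c _ => hx _
    _ = ∏ i, C * r ^ entries T i := Fintype.prod_equiv e _ _ fun c => by simp [entries]

noncomputable def content (f : ℕ → ℕ) (N : ℕ) (T : ℕ × ℕ → ℕ) : ℕ →₀ ℕ :=
  ∑ c ∈ cells f N, Finsupp.single (T c) 1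

lemma content_apply (k : ℕ) : content f N T k = #{c ∈ cells f N | T c = k} := by
  rw [content, Finsupp.finsetSum_apply, card_filter]
  simp only [Finsupp.single_apply]

lemma hasContent_iff (hf : Antitone f) (hN : ∀ i, N ≤ i → f i = 0) (d : ℕ →₀ ℕ) :
    HasContent f (fun _ => 0) T d ↔ content f N T = d := by
  have hcard (k : ℕ) :
      Nat.card {c : ℕ × ℕ | 0 ≤ c.2 ∧ c.2 < f c.1 ∧ T c = k} = content f N T k := by
    rw [content_apply, ← Set.ncard_coe_finset, ← Nat.card_coe_set_eq]
    congr
    ext c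
    simp [mem_cells hf hN]
  simp only [HasContent, hcard]
  exact ⟨fun h => Finsupp.ext fun k => (h k).symm, fun h k => by rw [h]⟩

lemma weight_eq_prod_content (x : ℕ → ℂ) :
    weight f N x T = ∏ k ∈ (content f N T).support, x k ^ content f N T k := by
  have hmaps : ∀ c ∈ cells f N, T c ∈ (content f N T).support := fun c hc => by
    rw [Finsupp.mem_support_iff, content_apply]
    exact (card_pos.2 ⟨c, mem_filter.2 ⟨hc, rfl⟩⟩ : 0 < #{c' ∈ cells f N | T c' = T c}).ne'
  rw [weight, ← prod_fiberwise_of_maps_to hmaps]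
  refine prod_congr rfl fun k _ => ?_
  rw [prod_congr rfl fun c hc => congrArg x (mem_filter.1 hc).2, prod_const, content_apply]

/-- Grouping the tableaux by content turns the tableau sum into the defining sum of `evalS`. -/
lemma evalS_schur_eq_tsum (hf : Antitone f) (hN : ∀ i, N ≤ i → f i = 0) {x : ℕ → ℂ}
    (hsum : Summable fun T : SSYT f => weight f N x T.1) :
    evalS (schur f) x = ∑' T : SSYT f, weight f N x T.1 := by
  refine ((hsum.hasSum.tsum_fiberwise fun T => content f N T.1).congr_fun fun d => ?_).tsum_eq
  have hfiber : ∀ T : (fun T : SSYT f => content f N T.1) ⁻¹' {d},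
      weight f N x T.1.1 = ∏ k ∈ d.support, x k ^ d k := fun T => by
    rw [weight_eq_prod_content, show content f N T.1.1 = d from T.2]
  have hcard : Nat.card ((fun T : SSYT f => content f N T.1) ⁻¹' {d}) =
      Nat.card {T // IsSSYT f (fun _ => 0) T ∧ HasContent f (fun _ => 0) T d} :=
    Nat.card_congr
      { toFun := fun T => ⟨T.1.1, T.1.2, (hasContent_iff hf hN d).2 T.2⟩
        invFun := fun T => ⟨⟨T.1, T.2.1⟩, (hasContent_iff hf hN d).1 T.2.2⟩ }
  rw [tsum_congr hfiber, tsum_const, hcard, nsmul_eq_mul, schur, skewSchur,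
    if_pos fun i => Nat.zero_le _]
  push_cast
  rfl

lemma tendsto_schurPoly (hf : Antitone f) (hN : ∀ i, N ≤ i → f i = 0) {x : ℕ → ℂ}
    (hsum : Summable fun T : SSYT f => weight f N x T.1) :
    Tendsto (fun n => schurPoly f N n x) atTop (𝓝 (∑' T : SSYT f, weight f N x T.1)) := by
  set s : ℕ → Finset (SSYT f) := fun n => (boundedSSYT f N n).subtype _
  have hs {n} {T : SSYT f} : T ∈ s n ↔ ∀ i j, j < f i → T.1 (i, j) < n := by
    simp [s, mem_boundedSSYT hf hN, T.2]
  have hmono : Monotone s := fun a b hab T hT =>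
    hs.2 fun i j h => (hs.1 hT i j h).trans_le hab
  have hexhaust (T : SSYT f) : ∃ n, T ∈ s n := ⟨(cells f N).sup T.1 + 1, hs.2 fun i j h =>
    Nat.lt_succ_of_le (le_sup (f := T.1) ((mem_cells hf hN).2 h))⟩
  refine (hsum.hasSum.comp (tendsto_atTop_finset_of_monotone hmono hexhaust)).congr fun n => ?_
  simp only [Function.comp_apply, s, sum_subtype_eq_sum_filter, schurPoly]
  congr 1
  exact filter_true_of_mem fun T hT => ((mem_boundedSSYT hf hN).1 hT).1

lemma norm_qSpec_le (hv : v ≠ 0) (hv1 : ‖v‖ < 1) (hw : Antitone w) (i : ℕ) :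
    ‖qSpec v w i‖ ≤ ‖v‖ ^ (1 - 2 * (w 0 : ℤ)) * (‖v‖ ^ 2) ^ i := by
  have hpos : 0 < ‖v‖ := norm_pos_iff.2 hv
  have hw0 := hw (Nat.zero_le i)
  calc ‖qSpec v w i‖ = ‖v‖ ^ (2 * ((i : ℤ) - (w i : ℤ)) + 1) := norm_zpow v _
    _ ≤ ‖v‖ ^ (1 - 2 * (w 0 : ℤ) + 2 * (i : ℤ)) :=
        zpow_le_zpow_right_of_le_one₀ hpos hv1.le (by omega)
    _ = ‖v‖ ^ (1 - 2 * (w 0 : ℤ)) * (‖v‖ ^ 2) ^ i := by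
        rw [zpow_add₀ hpos.ne', ← pow_mul, ← zpow_natCast]
        push_cast
        rfl

lemma tendsto_schurPoly_qSpec (hv : v ≠ 0) (hv1 : ‖v‖ < 1) (hw : Antitone w) (hf : Antitone f)
    (hN : ∀ i, N ≤ i → f i = 0) :
    Tendsto (fun n => schurPoly f N n (qSpec v w)) atTop (𝓝 (evalS (schur f) (qSpec v w))) := by
  have hsum := summable_weight hf hN (by positivity) (by positivity)
    (pow_lt_one₀ (norm_nonneg v) hv1 two_ne_zero) (norm_qSpec_le hv hv1 hw)
  rw [evalS_schur_eq_tsum hf hN hsum]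
  exact tendsto_schurPoly hf hN hsum

end SchurFunction

open SchurFunction Filter

/-- Two-legged symmetry identity:
s_α(q^{−ρ}) s_β(q^{−α−ρ}) = s_α(q^{−β−ρ}) s_β(q^{−ρ}), where q^{−ρ} = (q^{i−1/2})_{i≥1}
and q^{−α−ρ} = (q^{−α_i+i−1/2})_{i≥1}; here v = q^{1/2}. -/
theorem two_legged_identity (v q : ℂ) (hv : v ^ 2 = q)
    (h0 : 0 < ‖q‖) (h1 : ‖q‖ < 1)
    (f g : ℕ → ℕ) (hf : Antitone f) (hffin : (Function.support f).Finite)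
    (hg : Antitone g) (hgfin : (Function.support g).Finite) :
    evalS (schur f) (fun i => v ^ (2 * (i : ℤ) + 1)) *
        evalS (schur g) (fun i => v ^ (2 * ((i : ℤ) - (f i : ℤ)) + 1)) =
      evalS (schur f) (fun i => v ^ (2 * ((i : ℤ) - (g i : ℤ)) + 1)) *
        evalS (schur g) (fun i => v ^ (2 * (i : ℤ) + 1)) := by
  have hfin : ∀ᶠ i in atTop, f i = 0 ∧ g i = 0 := by
    rw [← Nat.cofinite_eq_atTop]
    exact hffin.eventually_cofinite_notMem.and hgfin.eventually_cofinite_notMem |>.mono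
      fun i hi => ⟨Function.notMem_support.1 hi.1, Function.notMem_support.1 hi.2⟩
  obtain ⟨N, hN⟩ := eventually_atTop.1 hfin
  have hv0 : v ≠ 0 := by rintro rfl; simp [← hv] at h0
  have hv1 : ‖v‖ < 1 := (pow_lt_one_iff_of_nonneg (norm_nonneg v) two_ne_zero).1 (by
    rwa [← norm_pow, hv])
  have hNf (i) (hi : N ≤ i) : f i = 0 := (hN i hi).1
  have hNg (i) (hi : N ≤ i) : g i = 0 := (hN i hi).2
  rw [← qSpec_zero]
  refine tendsto_nhds_unique
    ((tendsto_schurPoly_qSpec hv0 hv1 antitone_const hf hNf).mul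
      (tendsto_schurPoly_qSpec hv0 hv1 hf hg hNg))
    (((tendsto_schurPoly_qSpec hv0 hv1 hg hf hNf).mul
      (tendsto_schurPoly_qSpec hv0 hv1 antitone_const hg hNg)).congr' ?_)
  filter_upwards [eventually_ge_atTop N] with n hn
  exact (schurPoly_qSpec_mul_comm hv0 hv1 hf hg hNf hNg hn).symm
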